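/- Let c be the derivation of the free Lie algebra lie_n determined by c(x_i) = ⁅x_i, x_1 + ⋯ + x_n⁆ for all i (the inner derivation a ↦ ⁅a, x_1 + ⋯ + x_n⁆, equal to the sum Σ_{i<j} t^{i,j}). Then c commutes with every special derivation: for every derivation u of lie_n such that u(x_i) = ⁅x_i, a_i⁆ for some elements a_i ∈ lie_n (u is tangential) and u(x_1 + ⋯ + x_n) = 0 (u is special), one has ⁅c, u⁆ = 0. -/

import Mathlib

/-! With `s = x_1 + ⋯ + x_n` we have `c = -ad s`, and every derivation `D` satisfies
`⁅D, ad s⁆ = ad (D s)`, which vanishes as soon as `D s = 0`. -/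

open FreeLieAlgebra

namespace FreeLieAlgebra

variable (R X : Type*) [CommRing R]

theorem lieSpan_range_of : LieSubalgebra.lieSpan R (FreeLieAlgebra R X) (Set.range (of R)) = ⊤ := by
  set S := LieSubalgebra.lieSpan R (FreeLieAlgebra R X) (Set.range (of R))
  let g : FreeLieAlgebra R X →ₗ⁅R⁆ S :=
    lift R fun x ↦ ⟨of R x, LieSubalgebra.subset_lieSpan ⟨x, rfl⟩⟩
  have hg : S.incl.comp g = LieHom.id := hom_ext fun x ↦ by simp [g]
  refine eq_top_iff.2 fun x _ ↦ ?_
  have hx : S.incl (g x) = x := LieHom.congr_fun hg x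
  exact hx ▸ (g x).2

variable {R X} {M : Type*} [AddCommGroup M] [Module R M] [LieRingModule (FreeLieAlgebra R X) M]
  [LieModule R (FreeLieAlgebra R X) M]

theorem lieDerivation_ext {D₁ D₂ : LieDerivation R (FreeLieAlgebra R X) M}
    (h : ∀ x, D₁ (of R x) = D₂ (of R x)) : D₁ = D₂ :=
  LieDerivation.ext_of_lieSpan_eq_top _ (lieSpan_range_of R X) <| by
    rintro _ ⟨x, rfl⟩
    exact h x

end FreeLieAlgebra

theorem central_element_commutes_with_special_general (k : Type) [Field k] (n : ℕ)
    (c u : LieDerivation k (FreeLieAlgebra k (Fin n)) (FreeLieAlgebra k (Fin n)))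
    (hc : ∀ i, c (of k i) = ⁅of k i, ∑ j : Fin n, of k j⁆)
    (hspecial : u (∑ i : Fin n, of k i) = 0) :
    ⁅c, u⁆ = 0 := by
  have hc_eq : c = -LieDerivation.ad k _ (∑ j : Fin n, of k j) :=
    lieDerivation_ext fun i ↦ by simp [hc i, -map_sum]
  rw [hc_eq, neg_lie, ← lie_skew, neg_neg, LieDerivation.lie_der_ad_eq_ad_der, hspecial, map_zero]

/-- The inner derivation `c : a ↦ ⁅a, x_1 + ⋯ + x_n⁆` (equal to `Σ_{i<j} t^{i,j}`)
commutes with every special (tangential) derivation of the free Lie algebra `lie_n`. -/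
theorem central_element_commutes_with_special (k : Type) [Field k] [CharZero k] (n : ℕ)
    (c u : LieDerivation k (FreeLieAlgebra k (Fin n)) (FreeLieAlgebra k (Fin n)))
    (hc : ∀ i, c (of k i) = ⁅of k i, ∑ j : Fin n, of k j⁆)
    (a : Fin n → FreeLieAlgebra k (Fin n))
    (hu : ∀ i, u (of k i) = ⁅of k i, a i⁆)
    (hspecial : u (∑ i : Fin n, of k i) = 0) :
    ⁅c, u⁆ = 0 :=
  central_element_commutes_with_special_general k n c u hc hspecial
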